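/- Dependent swaps give a strict Tamari increase: let π = α u v β and ρ = α v u β with u < v, and suppose no entry of β lies strictly between u and v. Then ε(h(w(π))) <_T ε(h(w(ρ))) in the Tamari order on planar binary trees. -/

import Mathlib

/-- Indexed terms of the language `L^I`: generators `2^k` and partial compositions. -/
inductive Trm : Type
  | gen : ℕ → Trm
  | comp : Trm → ℕ → Trm → Trm
deriving DecidableEq

namespace Trm

/-- Arity `|A|`. -/
def arity : Trm → ℕ
  | gen _ => 2
  | comp A _ B => A.arity + B.arity - 1

/-- Set of indices occurring in a term. -/
def ind : Trm → Finset ℕ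
  | gen k => {k}
  | comp A _ B => A.ind ∪ B.ind

/-- Root index. -/
def root : Trm → ℕ
  | gen k => k
  | comp A _ _ => A.root

/-- Number of occurrences of the generator. -/
def countGen : Trm → ℕ
  | gen _ => 1
  | comp A _ B => A.countGen + B.countGen

end Trm

/-- The congruence `=_I` generated by (assoc1) and (assoc2). -/
inductive IEq : Trm → Trm → Prop
  | refl (A : Trm) : IEq A A
  | symm {A B} : IEq A B → IEq B A
  | trans {A B C} : IEq A B → IEq B C → IEq A C
  | congr {A A' B B'} (n : ℕ) : IEq A A' → IEq B B' →
      IEq (Trm.comp A n B) (Trm.comp A' n B')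
  | assoc1 (A B C : Trm) (n m : ℕ) : n ≤ m → m < n + B.arity →
      IEq (Trm.comp (Trm.comp A n B) m C) (Trm.comp A n (Trm.comp B (m - n + 1) C))
  | assoc2 (A B C : Trm) (n m : ℕ) : n + B.arity ≤ m →
      IEq (Trm.comp (Trm.comp A n B) m C) (Trm.comp (Trm.comp A (m - B.arity + 1) C) n B)

/-- Planar binary trees. -/
inductive BT : Type
  | leaf : BT
  | node : BT → BT → BT
deriving DecidableEq

namespace BT

/-- Number of leaves. -/
def leaves : BT → ℕ
  | leaf => 1
  | node l r => l.leaves + r.leaves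

/-- Graft `S` at the `i`-th leaf (1-indexed) of a tree. -/
def graft : BT → ℕ → BT → BT
  | leaf, _, S => S
  | node l r, i, S =>
    if i ≤ l.leaves then node (l.graft i S) r else node l (r.graft (i - l.leaves) S)

end BT

/-- Evaluation `ε` of indexed terms to planar binary trees. -/
def Trm.eval : Trm → BT
  | Trm.gen _ => BT.node BT.leaf BT.leaf
  | Trm.comp A i B => A.eval.graft i B.eval

/-- `l`-factors. -/
inductive LFactor : Trm → Prop
  | gen (k : ℕ) : LFactor (Trm.gen k)
  | step {A : Trm} (j : ℕ) : LFactor A → j ∉ A.ind →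
      LFactor (Trm.comp A ((A.ind.filter (· < j)).card + 1) (Trm.gen j))

/-- Auxiliary for the head-insertion encoding: `done` is the list of already
inserted letters. -/
def hAux : Trm → List ℕ → List ℕ → Trm
  | A, _, [] => A
  | A, done, y :: rest =>
      hAux (Trm.comp A ((done.filter (· < y)).length + 1) (Trm.gen y)) (done ++ [y]) rest

/-- Head-insertion encoding `h` (junk value on the empty word). -/
def hWord : List ℕ → Trm
  | [] => Trm.gen 0
  | x :: rest => hAux (Trm.gen x) [x] rest

/-- `u_a(x)`: number of letters to the left of `x` in `a` that are greater than `x`. -/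
def uCount (a : List ℕ) (x : ℕ) : ℕ := ((a.takeWhile (· ≠ x)).filter (x < ·)).length

/-- Decreasing rearrangement of a word. -/
def sortDesc (a : List ℕ) : List ℕ := (a.mergeSort (· ≤ ·)).reverse

/-- Decreasing encoding `f` (junk value on the empty word). -/
def fWord (a : List ℕ) : Trm :=
  match sortDesc a with
  | [] => Trm.gen 0
  | k :: rest => rest.foldl (fun A x => Trm.comp A (uCount a x + 1) (Trm.gen x)) (Trm.gen k)

/-- Standardization of a word of distinct integers. -/
def std (a : List ℕ) : List ℕ := a.map (fun x => (a.filter (· ≤ x)).length)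

/-- Tonks' vertex map, splitting form `φ`. -/
def tonksPhi (a : List ℕ) : BT :=
  match ha : a.getLast? with
  | none => BT.leaf
  | some x =>
      BT.node (tonksPhi (std (a.filter (· < x)))) (tonksPhi (std (a.filter (x < ·))))
termination_by a.length
decreasing_by
  · have hx : x ∈ a := List.mem_of_mem_getLast? (Option.mem_def.mpr ha)
    have : (a.filter (· < x)).length < a.length := by
      apply List.length_filter_lt_length_iff_exists.2
      exact ⟨x, hx, by simp⟩
    simp only [std, List.length_map, List.unattach]
    refine lt_of_lt_of_eq ?_ List.length_attach
    apply List.length_filter_lt_length_iff_exists.2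
    exact ⟨⟨x, hx⟩, List.mem_attach _ _, by simp⟩
  · have hx : x ∈ a := List.mem_of_mem_getLast? (Option.mem_def.mpr ha)
    have : (a.filter (x < ·)).length < a.length := by
      apply List.length_filter_lt_length_iff_exists.2
      exact ⟨x, hx, by simp⟩
    simp only [std, List.length_map, List.unattach]
    refine lt_of_lt_of_eq ?_ List.length_attach
    apply List.length_filter_lt_length_iff_exists.2
    exact ⟨⟨x, hx⟩, List.mem_attach _ _, by simp⟩

/-- Tonks' vertex map, head-grafting form `φ̂`. -/
def phiHat : List ℕ → BT
  | [] => BT.leaf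
  | x :: rest => (phiHat (std rest)).graft x (BT.node BT.leaf BT.leaf)
termination_by a => a.length
decreasing_by
  simp [std]

/-- The Loday–Ronco map `ψ`. -/
def lodayPsi (a : List ℕ) : BT :=
  match hm : a.maximum with
  | none => BT.leaf
  | some m =>
      let i := a.idxOf m
      BT.node (lodayPsi (std (a.take i))) (lodayPsi (std (a.drop (i + 1))))
termination_by a.length
decreasing_by
  · have hmem : m ∈ a := List.maximum_mem hm
    have hi : a.idxOf m < a.length := List.idxOf_lt_length_iff.2 hmem
    simp only [std, List.length_map, List.length_take]
    omega
  · have : a ≠ [] := by rintro rfl; simp [List.maximum] at hm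
    have : 0 < a.length := List.length_pos_iff.2 this
    simp only [std, List.length_map, List.length_drop]
    omega

/-- Inverse of a permutation word on `{1,…,n}`. -/
def invWord (π : List ℕ) : List ℕ :=
  (List.range π.length).map (fun j => π.idxOf (j + 1) + 1)

/-- One Tamari (right rotation) step, at any subtree. -/
inductive TamariStep : BT → BT → Prop
  | rot (X Y Z : BT) : TamariStep (BT.node (BT.node X Y) Z) (BT.node X (BT.node Y Z))
  | left {l l'} (r : BT) : TamariStep l l' → TamariStep (BT.node l r) (BT.node l' r)
  | right (l : BT) {r r'} : TamariStep r r' → TamariStep (BT.node l r) (BT.node l r')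

/-- The Tamari order. -/
def TamariLE : BT → BT → Prop := Relation.ReflTransGen TamariStep

/-- The strict Tamari order. -/
def TamariLT : BT → BT → Prop := Relation.TransGen TamariStep

/-- One cover of the right weak Bruhat order on words. -/
inductive BruhatStep : List ℕ → List ℕ → Prop
  | swap (α : List ℕ) {u v : ℕ} (β : List ℕ) : u < v →
      BruhatStep (α ++ u :: v :: β) (α ++ v :: u :: β)

/-- The right weak Bruhat order on words. -/
def BruhatLE : List ℕ → List ℕ → Prop := Relation.ReflTransGen BruhatStep

/-- Head-insertion index `k(a; σ)`. -/
def kIdx (a : ℕ) (σ : List ℕ) : ℕ := 1 + (σ.filter (· < a)).length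

/-!
Reading `π` backwards, head insertion first builds a tree `T` from `β`, then grafts a caret for
each of `u` and `v`, then continues with `α`. Since no letter of `β` lies strictly between `u`
and `v`, both are inserted at the same leaf `c + 1` of `T`: for `π` (letters `v`, `u`) the two
carets form the left comb `((·,·),·)` there, for `ρ` (letters `u`, `v`) the right comb `(·,(·,·))`,
which is one rotation higher. The insertion positions of later letters depend only on the multiset
of letters already inserted, so grafting the letters of `α` preserves that rotation.
-/

namespace BT

def caret : BT := node leaf leaf

lemma leaves_graft (T : BT) (i : ℕ) (S : BT) :
    (T.graft i S).leaves + 1 = T.leaves + S.leaves := by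
  induction T generalizing i with
  | leaf => simp only [graft, leaves]; omega
  | node l r ihl ihr =>
    simp only [graft]
    split
    · simp only [leaves]; have := ihl i; omega
    · simp only [leaves]; have := ihr (i - l.leaves); omega

lemma graft_graft (T S R : BT) {i j : ℕ} (hi : 1 ≤ i) (hiT : i ≤ T.leaves) (hj : 1 ≤ j)
    (hjS : j ≤ S.leaves) : (T.graft i S).graft (i + j - 1) R = T.graft i (S.graft j R) := by
  induction T generalizing i with
  | leaf =>
    obtain rfl : i = 1 := by simp only [leaves] at hiT; omega
    simp only [graft, Nat.add_sub_cancel_left]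
  | node l r ihl ihr =>
    by_cases hil : i ≤ l.leaves
    · have hlen : i + j - 1 ≤ (l.graft i S).leaves := by have := leaves_graft l i S; omega
      simp only [graft, if_pos hil, if_pos hlen, ihl hi hil]
    · have hidx : i + j - 1 - l.leaves = i - l.leaves + j - 1 := by omega
      simp only [leaves] at hiT
      simp only [graft, if_neg hil, if_neg (show ¬ i + j - 1 ≤ l.leaves by omega), hidx,
        ihr (show 1 ≤ i - l.leaves by omega) (show i - l.leaves ≤ r.leaves by omega)]

end BT

namespace TamariStep

lemma leaves_eq {T T' : BT} (h : TamariStep T T') : T.leaves = T'.leaves := by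
  induction h <;> simp_all only [BT.leaves]; omega

lemma graft_left {T T' : BT} (h : TamariStep T T') (i : ℕ) (S : BT) :
    TamariStep (T.graft i S) (T'.graft i S) := by
  induction h generalizing i with
  | rot X Y Z =>
    simp only [BT.graft, BT.leaves]
    by_cases hX : i ≤ X.leaves
    · simp only [if_pos hX, if_pos (show i ≤ X.leaves + Y.leaves by omega)]
      exact rot _ _ _
    · by_cases hXY : i ≤ X.leaves + Y.leaves
      · simp only [if_pos hXY, if_neg hX, if_pos (show i - X.leaves ≤ Y.leaves by omega)]
        exact rot _ _ _
      · simp only [if_neg hXY, if_neg hX, if_neg (show ¬ i - X.leaves ≤ Y.leaves by omega),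
          Nat.sub_add_eq]
        exact rot _ _ _
  | left r h ih =>
    simp only [BT.graft, h.leaves_eq]
    split
    · exact left _ (ih i)
    · exact left _ h
  | right l h ih =>
    simp only [BT.graft]
    split
    · exact right _ h
    · exact right _ (ih _)

lemma graft_right (T : BT) (i : ℕ) {S S' : BT} (h : TamariStep S S') :
    TamariStep (T.graft i S) (T.graft i S') := by
  induction T generalizing i with
  | leaf => exact h
  | node l r ihl ihr =>
    simp only [BT.graft]
    split
    · exact left _ (ihl i)
    · exact right _ (ihr _)

lemma graft_caret_caret (T : BT) {i : ℕ} (hi : 1 ≤ i) (hiT : i ≤ T.leaves) :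
    TamariStep ((T.graft i BT.caret).graft i BT.caret)
      ((T.graft i BT.caret).graft (i + 1) BT.caret) := by
  have hleft : (T.graft i BT.caret).graft i BT.caret = T.graft i (.node BT.caret .leaf) := by
    simpa [BT.caret, BT.graft, BT.leaves] using
      BT.graft_graft T BT.caret BT.caret hi hiT (j := 1) le_rfl (by decide)
  have hright : (T.graft i BT.caret).graft (i + 1) BT.caret = T.graft i (.node .leaf BT.caret) := by
    simpa [BT.caret, BT.graft, BT.leaves] using
      BT.graft_graft T BT.caret BT.caret hi hiT (j := 2) (by norm_num) (by decide)
  rw [hleft, hright]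
  exact graft_right T i (rot _ _ _)

end TamariStep

namespace BT

def insertWord : BT → List ℕ → List ℕ → BT
  | T, _, [] => T
  | T, done, y :: w => insertWord (T.graft ((done.filter (· < y)).length + 1) caret) (done ++ [y]) w

lemma leaves_insertWord (T : BT) (done w : List ℕ) :
    (T.insertWord done w).leaves = T.leaves + w.length := by
  induction w generalizing T done with
  | nil => rfl
  | cons y w ih =>
    simp only [insertWord, ih, List.length_cons]
    have := leaves_graft T ((done.filter (· < y)).length + 1) caret
    simp only [caret, leaves] at this ⊢
    omega

lemma insertWord_append (T : BT) (done w₁ w₂ : List ℕ) :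
    T.insertWord done (w₁ ++ w₂) = (T.insertWord done w₁).insertWord (done ++ w₁) w₂ := by
  induction w₁ generalizing T done with
  | nil => simp only [List.nil_append, List.append_nil, insertWord]
  | cons y w ih => simp only [List.cons_append, insertWord, ih, List.append_assoc, List.nil_append]

end BT

lemma TamariStep.insertWord {T T' : BT} (h : TamariStep T T') {done done' : List ℕ}
    (hperm : done.Perm done') (w : List ℕ) :
    TamariStep (T.insertWord done w) (T'.insertWord done' w) := by
  induction w generalizing T T' done done' with
  | nil => exact h
  | cons y w ih =>
    simp only [BT.insertWord, (hperm.filter _).length_eq]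
    exact ih (h.graft_left _ _) (hperm.append_right _)

lemma TamariStep.insertWord_swap (T : BT) {done : List ℕ} {u v : ℕ} (huv : u < v)
    (hcount : (done.filter (· < u)).length = (done.filter (· < v)).length)
    (hleaves : done.length < T.leaves) (w : List ℕ) :
    TamariStep (T.insertWord done (v :: u :: w)) (T.insertWord done (u :: v :: w)) := by
  set c := (done.filter (· < u)).length
  have hvu : ((done ++ [v]).filter (· < u)).length = c := by
    simp [List.filter_append, Nat.not_lt.2 huv.le, c]
  have huv' : ((done ++ [u]).filter (· < v)).length = c + 1 := by
    simp [List.filter_append, huv, hcount]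
  have hc : c + 1 ≤ T.leaves := (List.length_filter_le _ _).trans_lt hleaves
  simp only [BT.insertWord, hvu, huv', ← hcount]
  refine (graft_caret_caret T (Nat.le_add_left 1 c) hc).insertWord ?_ w
  simpa only [List.append_assoc, List.singleton_append] using
    (List.Perm.swap u v []).append_left done

lemma eval_hAux (A : Trm) (done w : List ℕ) :
    (hAux A done w).eval = A.eval.insertWord done w := by
  induction w generalizing A done with
  | nil => rfl
  | cons y w ih => exact ih _ _

lemma eval_hWord {w : List ℕ} (hw : w ≠ []) : (hWord w).eval = BT.leaf.insertWord [] w := by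
  obtain ⟨x, w, rfl⟩ := List.exists_cons_of_ne_nil hw
  exact eval_hAux _ _ _

theorem dependent_swap_strict_general (α β : List ℕ) (u v : ℕ) (huv : u < v)
    (hnd : (α ++ u :: v :: β).Nodup)
    (hdep : ¬ ∃ x ∈ β, u < x ∧ x < v) :
    TamariLT ((hWord (α ++ u :: v :: β).reverse).eval)
      ((hWord (α ++ v :: u :: β).reverse).eval) := by
  have hu : u ∉ β := fun h => by simp_all [List.nodup_append]
  have hcount : (β.reverse.filter (· < u)).length = (β.reverse.filter (· < v)).length := by
    congr 1
    refine List.filter_congr fun x hx => decide_eq_decide.2 ⟨fun h => by omega, fun h => ?_⟩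
    have hxu : x ≠ u := by rintro rfl; exact hu (List.mem_reverse.1 hx)
    by_contra hux
    exact hdep ⟨x, List.mem_reverse.1 hx, by omega, h⟩
  simp only [List.reverse_append, List.reverse_cons, List.append_assoc, List.cons_append]
  rw [eval_hWord (by simp), eval_hWord (by simp), BT.insertWord_append, BT.insertWord_append]
  refine .single (TamariStep.insertWord_swap _ huv (by simpa using hcount) ?_ _)
  simp [BT.leaves_insertWord, BT.leaves]

theorem dependent_swap_strict (α β : List ℕ) (u v : ℕ) (huv : u < v)
    (hnd : (α ++ u :: v :: β).Nodup) (hpos : ∀ x ∈ α ++ u :: v :: β, 0 < x)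
    (hdep : ¬ ∃ x ∈ β, u < x ∧ x < v) :
    TamariLT ((hWord (α ++ u :: v :: β).reverse).eval)
      ((hWord (α ++ v :: u :: β).reverse).eval) :=
  dependent_swap_strict_general α β u v huv hnd hdep
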